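/- arXiv:1911.00872 — 6 statements merged into one kernel-verified Lean document; each statement's English description precedes it below -/
import Mathlib

section
/- Let Z be a nonempty subset of a real vector space V, and let ≿ be a preorder on Z satisfying strong independence (for α ∈ (0,1) and x, y, z ∈ Z with the relevant mixtures lying in Z, x ≿ y iff αx + (1-α)z ≿ αy + (1-α)z). Assume Z is convex. Then the set C = {λ(x - y) : λ > 0, x, y ∈ Z, x ≿ y} is a convex cone in V. -/
/-!
Closure under positive scaling is immediate. For the sum of `l • (x - y)` and `m • (x' - y')`,
mix both preferences with weight `a = l / (l + m)`: independence moves `x ≿ y` to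
`a x + (1-a) x' ≿ a y + (1-a) x'` and `x' ≿ y'` to `a y + (1-a) x' ≿ a y + (1-a) y'`, so by
transitivity `a x + (1-a) x' ≿ a y + (1-a) y'`, and `l + m` times the difference of these two
mixtures is the sum.
-/

def IsConvexCone {V : Type*} [AddCommGroup V] [Module ℝ V] (C : Set V) : Prop :=
  (0 : V) ∈ C ∧ (∀ x ∈ C, ∀ y ∈ C, x + y ∈ C) ∧ ∀ (l : ℝ), 0 < l → ∀ x ∈ C, l • x ∈ C

section DifferenceCone

variable {V : Type*} [AddCommGroup V] [Module ℝ V] {Z : Set V} {r : V → V → Prop}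

def differenceCone (Z : Set V) (r : V → V → Prop) : Set V :=
  {v | ∃ (l : ℝ) (x y : V), 0 < l ∧ x ∈ Z ∧ y ∈ Z ∧ r x y ∧ v = l • (x - y)}

theorem rel_combo_of_rel_of_rel (hconv : Convex ℝ Z)
    (htrans : ∀ x ∈ Z, ∀ y ∈ Z, ∀ z ∈ Z, r x y → r y z → r x z)
    (hmix : ∀ (a : ℝ), 0 < a → a < 1 → ∀ x ∈ Z, ∀ y ∈ Z, ∀ z ∈ Z,
      r x y → r (a • x + (1 - a) • z) (a • y + (1 - a) • z))
    {a : ℝ} (ha₀ : 0 < a) (ha₁ : a < 1) {x y x' y' : V}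
    (hx : x ∈ Z) (hy : y ∈ Z) (hx' : x' ∈ Z) (hy' : y' ∈ Z) (hxy : r x y) (hxy' : r x' y') :
    r (a • x + (1 - a) • x') (a • y + (1 - a) • y') := by
  have hb₀ : 0 ≤ 1 - a := by linarith
  have hab : a + (1 - a) = 1 := by ring
  have h_left : r (a • x + (1 - a) • x') (a • y + (1 - a) • x') :=
    hmix a ha₀ ha₁ x hx y hy x' hx' hxy
  have h_right : r (a • y + (1 - a) • x') (a • y + (1 - a) • y') := by
    have h := hmix (1 - a) (by linarith) (by linarith) x' hx' y' hy' y hy hxy'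
    rwa [sub_sub_cancel, add_comm, add_comm ((1 - a) • y')] at h
  exact htrans _ (hconv hx hx' ha₀.le hb₀ hab) _ (hconv hy hx' ha₀.le hb₀ hab) _
    (hconv hy hy' ha₀.le hb₀ hab) h_left h_right

theorem smul_sub_add_smul_sub_eq_combo {l m : ℝ} (hlm : l + m ≠ 0) (x y x' y' : V) :
    l • (x - y) + m • (x' - y') = (l + m) •
      ((l / (l + m)) • x + (1 - l / (l + m)) • x' -
        ((l / (l + m)) • y + (1 - l / (l + m)) • y')) := by
  match_scalars <;> field_simp <;> ring

theorem zero_mem_differenceCone {z : V} (hz : z ∈ Z) (hzz : r z z) :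
    (0 : V) ∈ differenceCone Z r :=
  ⟨1, z, z, one_pos, hz, hz, hzz, by rw [sub_self, smul_zero]⟩

theorem smul_mem_differenceCone {l : ℝ} (hl : 0 < l) {v : V} (hv : v ∈ differenceCone Z r) :
    l • v ∈ differenceCone Z r := by
  obtain ⟨m, x, y, hm, hx, hy, hxy, rfl⟩ := hv
  exact ⟨l * m, x, y, mul_pos hl hm, hx, hy, hxy, smul_smul l m (x - y)⟩

theorem add_mem_differenceCone (hconv : Convex ℝ Z)
    (htrans : ∀ x ∈ Z, ∀ y ∈ Z, ∀ z ∈ Z, r x y → r y z → r x z)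
    (hmix : ∀ (a : ℝ), 0 < a → a < 1 → ∀ x ∈ Z, ∀ y ∈ Z, ∀ z ∈ Z,
      r x y → r (a • x + (1 - a) • z) (a • y + (1 - a) • z))
    {v w : V} (hv : v ∈ differenceCone Z r) (hw : w ∈ differenceCone Z r) :
    v + w ∈ differenceCone Z r := by
  obtain ⟨l, x, y, hl, hx, hy, hxy, rfl⟩ := hv
  obtain ⟨m, x', y', hm, hx', hy', hxy', rfl⟩ := hw
  have hlm : 0 < l + m := by linarith
  set a := l / (l + m)
  have ha₀ : 0 < a := div_pos hl hlm
  have ha₁ : a < 1 := (div_lt_one hlm).mpr (by linarith)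
  have hb₀ : 0 ≤ 1 - a := by linarith
  have hab : a + (1 - a) = 1 := by ring
  exact ⟨l + m, _, _, hlm, hconv hx hx' ha₀.le hb₀ hab, hconv hy hy' ha₀.le hb₀ hab,
    rel_combo_of_rel_of_rel hconv htrans hmix ha₀ ha₁ hx hy hx' hy' hxy hxy',
    smul_sub_add_smul_sub_eq_combo hlm.ne' x y x' y'⟩

end DifferenceCone

theorem cone_of_strong_independence {V : Type*} [AddCommGroup V] [Module ℝ V]
    (Z : Set V) (hne : Z.Nonempty) (hconv : Convex ℝ Z) (r : V → V → Prop)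
    (hrefl : ∀ x ∈ Z, r x x)
    (htrans : ∀ x ∈ Z, ∀ y ∈ Z, ∀ z ∈ Z, r x y → r y z → r x z)
    (hSI : ∀ (a : ℝ), 0 < a → a < 1 → ∀ x ∈ Z, ∀ y ∈ Z, ∀ z ∈ Z,
      (r x y ↔ r (a • x + (1 - a) • z) (a • y + (1 - a) • z))) :
    IsConvexCone {v : V | ∃ (l : ℝ) (x y : V),
      0 < l ∧ x ∈ Z ∧ y ∈ Z ∧ r x y ∧ v = l • (x - y)} := by
  obtain ⟨z, hz⟩ := hne
  have hmix := fun a ha₀ ha₁ x hx y hy w hw => (hSI a ha₀ ha₁ x hx y hy w hw).mp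
  exact ⟨zero_mem_differenceCone hz (hrefl z hz),
    fun _ hv _ hw => add_mem_differenceCone hconv htrans hmix hv hw,
    fun _ hl _ hv => smul_mem_differenceCone hl hv⟩
end

section
/- Let Z be a nonempty convex subset of a real vector space V, and let ≿ be a preorder on Z satisfying strong independence. Define the convex cone C = {λ(x - y) : λ > 0, x, y ∈ Z, x ≿ y} and the linear preorder ≿_V on V by v ≿_V w ⟺ v - w ∈ C. Then for all x, y ∈ Z: x ≿ y if and only if x ≿_V y. That is, the inclusion of Z into (V, ≿_V) represents ≿. -/
/-!
If `x - y = l • (x' - y')` with `l > 0` and `a = (1 + l)⁻¹`, then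
`a • y + (1 - a) • x' = a • x + (1 - a) • y'`. Strong independence (mixing with `x'`) turns
`x ≿ y` into a comparison between `a • x + (1 - a) • x'` and `a • y + (1 - a) • x'`, and
(mixing with `x`) turns `x' ≿ y'` into a comparison between `a • x + (1 - a) • x'` and
`a • x + (1 - a) • y'`. These are the same pair of points, so `x ≿ y ↔ x' ≿ y'`: the relation
only depends on the ray spanned by `x - y`.
-/

section

variable {V : Type*} [AddCommGroup V] [Module ℝ V]

def StrongIndependence (Z : Set V) (r : V → V → Prop) : Prop :=
  ∀ (a : ℝ), 0 < a → a < 1 → ∀ x ∈ Z, ∀ y ∈ Z, ∀ z ∈ Z,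
    (r x y ↔ r (a • x + (1 - a) • z) (a • y + (1 - a) • z))

theorem smul_add_smul_eq_of_sub_eq_smul_sub {x y x' y' : V} {l : ℝ}
    (h : x - y = l • (x' - y')) (a : ℝ) :
    a • y + (a * l) • x' = a • x + (a * l) • y' := by
  linear_combination (norm := module) -a • h

theorem StrongIndependence.rel_iff_of_sub_eq_smul_sub {Z : Set V} {r : V → V → Prop}
    (hSI : StrongIndependence Z r) {x y x' y' : V} (hx : x ∈ Z) (hy : y ∈ Z)
    (hx' : x' ∈ Z) (hy' : y' ∈ Z) {l : ℝ} (hl : 0 < l) (h : x - y = l • (x' - y')) :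
    r x y ↔ r x' y' := by
  set a : ℝ := (1 + l)⁻¹ with ha
  have ha₀ : 0 < a := by positivity
  have ha₁ : a < 1 := inv_lt_one_of_one_lt₀ (by linarith)
  have hal : 1 - a = a * l := by rw [ha]; field_simp; ring
  have hmix : a • y + (1 - a) • x' = a • x + (1 - a) • y' := by
    rw [hal]; exact smul_add_smul_eq_of_sub_eq_smul_sub h a
  have hxy := hSI a ha₀ ha₁ x hx y hy x' hx'
  have hxy' := hSI (1 - a) (by linarith) (by linarith) x' hx' y' hy' x hx
  rw [sub_sub_cancel, add_comm, add_comm (_ • y')] at hxy'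
  rw [hxy, hxy', hmix]

end

theorem inclusion_represents_general {V : Type*} [AddCommGroup V] [Module ℝ V]
    (Z : Set V) (r : V → V → Prop)
    (hSI : ∀ (a : ℝ), 0 < a → a < 1 → ∀ x ∈ Z, ∀ y ∈ Z, ∀ z ∈ Z,
      (r x y ↔ r (a • x + (1 - a) • z) (a • y + (1 - a) • z))) :
    ∀ x ∈ Z, ∀ y ∈ Z,
      (r x y ↔ x - y ∈ {v : V | ∃ (l : ℝ) (x' y' : V),
        0 < l ∧ x' ∈ Z ∧ y' ∈ Z ∧ r x' y' ∧ v = l • (x' - y')}) := by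
  intro x hx y hy
  constructor
  · intro hr
    exact ⟨1, x, y, one_pos, hx, hy, hr, (one_smul ℝ _).symm⟩
  · rintro ⟨l, x', y', hl, hx', hy', hr, h⟩
    exact (StrongIndependence.rel_iff_of_sub_eq_smul_sub hSI hx hy hx' hy' hl h).mpr hr

theorem inclusion_represents {V : Type*} [AddCommGroup V] [Module ℝ V]
    (Z : Set V) (hne : Z.Nonempty) (hconv : Convex ℝ Z) (r : V → V → Prop)
    (hrefl : ∀ x ∈ Z, r x x)
    (htrans : ∀ x ∈ Z, ∀ y ∈ Z, ∀ z ∈ Z, r x y → r y z → r x z)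
    (hSI : ∀ (a : ℝ), 0 < a → a < 1 → ∀ x ∈ Z, ∀ y ∈ Z, ∀ z ∈ Z,
      (r x y ↔ r (a • x + (1 - a) • z) (a • y + (1 - a) • z))) :
    ∀ x ∈ Z, ∀ y ∈ Z,
      (r x y ↔ x - y ∈ {v : V | ∃ (l : ℝ) (x' y' : V),
        0 < l ∧ x' ∈ Z ∧ y' ∈ Z ∧ r x' y' ∧ v = l • (x' - y')}) :=
  inclusion_represents_general Z r hSI
end

section
/- (Abstract Harsanyi theorem, affine representation direction) Let X be a nonempty set, Y and Z real vector spaces, and f : X → Y, g : X → Z functions such that the joint image (f,g)(X) ⊆ Y × Z is convex. If g(x) = g(x') implies f(x) = f(x') for all x, x' ∈ X, then there exist a linear map L : Z → Y and y₀ ∈ Y such that f = L ∘ g + y₀. -/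
theorem abstract_harsanyi {X Y Z : Type*} [Nonempty X]
    [AddCommGroup Y] [Module ℝ Y] [AddCommGroup Z] [Module ℝ Z]
    (f : X → Y) (g : X → Z)
    (hconv : Convex ℝ (Set.range fun x => (f x, g x)))
    (hinj : ∀ x x' : X, g x = g x' → f x = f x') :
    ∃ (L : Z →ₗ[ℝ] Y) (y₀ : Y), ∀ x, f x = L (g x) + y₀ := by
  classical
  obtain ⟨x₀⟩ := ‹Nonempty X›
  -- convex combinations of points in the joint image are realized
  have hA : ∀ (a : ℝ) (x₁ x₂ : X), 0 ≤ a → a ≤ 1 →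
      ∃ x₃, f x₃ = a • f x₁ + (1-a) • f x₂ ∧ g x₃ = a • g x₁ + (1-a) • g x₂ := by
    intro a x₁ x₂ ha ha1
    have h1 : (f x₁, g x₁) ∈ Set.range (fun x => (f x, g x)) := ⟨x₁, rfl⟩
    have h2 : (f x₂, g x₂) ∈ Set.range (fun x => (f x, g x)) := ⟨x₂, rfl⟩
    obtain ⟨x₃, hx₃⟩ := hconv h1 h2 (a := a) (b := 1 - a) ha (by linarith) (by ring)
    exact ⟨x₃, by simpa using congrArg Prod.fst hx₃, by simpa using congrArg Prod.snd hx₃⟩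
  -- scaling down
  have hScale : ∀ (x : X) (t : ℝ), 0 < t → t ≤ 1 →
      ∃ x', g x' - g x₀ = t • (g x - g x₀) ∧ f x' - f x₀ = t • (f x - f x₀) := by
    intro x t ht ht1
    obtain ⟨x', hf, hg⟩ := hA t x x₀ ht.le ht1
    exact ⟨x', by rw [hg]; module, by rw [hf]; module⟩
  -- well-definedness
  have hW : ∀ (s t : ℝ) (x x' : X), 0 < s → 0 < t →
      s • (g x - g x₀) = t • (g x' - g x₀) →
      s • (f x - f x₀) = t • (f x' - f x₀) := by
    have key : ∀ (s t : ℝ) (x x' : X), 0 < s → 0 < t → t ≤ s →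
        s • (g x - g x₀) = t • (g x' - g x₀) →
        s • (f x - f x₀) = t • (f x' - f x₀) := by
      intro s t x x' hs ht hts hg
      obtain ⟨x'', hg'', hf''⟩ :=
        hScale x' (t/s) (div_pos ht hs) (div_le_one_of_le₀ hts hs.le)
      have h1 : g x'' - g x₀ = g x - g x₀ := by
        rw [hg'', div_eq_inv_mul, mul_smul, ← hg, inv_smul_smul₀ hs.ne']
      have h2 : g x'' = g x := by rwa [sub_left_inj] at h1
      have h3 : f x'' = f x := hinj _ _ h2
      have h4 : f x - f x₀ = (t/s) • (f x' - f x₀) := by rw [← h3]; exact hf''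
      rw [h4, smul_smul]
      congr 1
      field_simp
    intro s t x x' hs ht hg
    rcases le_total t s with h | h
    · exact key s t x x' hs ht h hg
    · exact (key t s x' x ht hs h hg.symm).symm
  -- the cone K and the function ψ on it
  set K : Set Z := {u | ∃ t : ℝ, ∃ x : X, 0 < t ∧ t • u = g x - g x₀} with hKdef
  have hK0 : (0:Z) ∈ K := ⟨1, x₀, one_pos, by simp⟩
  have hKgx : ∀ x : X, g x - g x₀ ∈ K := fun x => ⟨1, x, one_pos, by simp⟩
  have huniq : ∀ (u : Z) (t s : ℝ) (x x' : X), 0 < t → 0 < s →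
      t • u = g x - g x₀ → s • u = g x' - g x₀ →
      t⁻¹ • (f x - f x₀) = s⁻¹ • (f x' - f x₀) := by
    intro u t s x x' ht hs htu hsu
    have hgg : s • (g x - g x₀) = t • (g x' - g x₀) := by
      rw [← htu, ← hsu, smul_comm]
    have hff := hW s t x x' hs ht hgg
    calc t⁻¹ • (f x - f x₀)
        = t⁻¹ • (s⁻¹ • (s • (f x - f x₀))) := by rw [inv_smul_smul₀ hs.ne']
      _ = t⁻¹ • (s⁻¹ • (t • (f x' - f x₀))) := by rw [hff]
      _ = s⁻¹ • (f x' - f x₀) := by rw [smul_comm s⁻¹ t, inv_smul_smul₀ ht.ne']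
  obtain ⟨ψ, hψ⟩ : ∃ ψ : Z → Y, ∀ (u : Z) (t : ℝ) (x : X), 0 < t →
      t • u = g x - g x₀ → ψ u = t⁻¹ • (f x - f x₀) := by
    refine ⟨fun u => if h : u ∈ K then
      (Classical.choose h)⁻¹ • (f (Classical.choose (Classical.choose_spec h)) - f x₀)
      else 0, ?_⟩
    intro u t x ht htu
    have hu : u ∈ K := ⟨t, x, ht, htu⟩
    simp only [dif_pos hu]
    exact huniq u (Classical.choose hu) t (Classical.choose (Classical.choose_spec hu)) x
      (Classical.choose_spec (Classical.choose_spec hu)).1 ht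
      (Classical.choose_spec (Classical.choose_spec hu)).2 htu
  have hψ0 : ψ 0 = 0 := by
    have := hψ 0 1 x₀ one_pos (by simp)
    simpa using this
  have hψgx : ∀ x : X, ψ (g x - g x₀) = f x - f x₀ := by
    intro x
    have := hψ (g x - g x₀) 1 x one_pos (by simp)
    simpa using this
  -- K is closed under positive scaling and ψ is homogeneous
  have hKsmul : ∀ (c : ℝ) (u : Z), 0 < c → u ∈ K → c • u ∈ K ∧ ψ (c • u) = c • ψ u := by
    intro c u hc hu
    obtain ⟨t, x, ht, htu⟩ := hu
    have h1 : (t/c) • (c • u) = g x - g x₀ := by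
      rw [smul_smul, div_mul_cancel₀ _ hc.ne']; exact htu
    refine ⟨⟨t/c, x, div_pos ht hc, h1⟩, ?_⟩
    rw [hψ (c • u) (t/c) x (div_pos ht hc) h1, hψ u t x ht htu, smul_smul]
    congr 1
    rw [inv_div, div_eq_mul_inv]
  -- K is closed under addition and ψ is additive
  have hKadd : ∀ u v : Z, u ∈ K → v ∈ K → u + v ∈ K ∧ ψ (u + v) = ψ u + ψ v := by
    intro u v hu hv
    obtain ⟨t, x, ht, htu⟩ := hu
    obtain ⟨s, x', hs, hsv⟩ := hv
    set r := min t s with hrdef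
    have hr : 0 < r := lt_min ht hs
    obtain ⟨a, hga, hfa⟩ := hScale x (r/t) (div_pos hr ht)
      (div_le_one_of_le₀ (min_le_left t s) ht.le)
    obtain ⟨b, hgb, hfb⟩ := hScale x' (r/s) (div_pos hr hs)
      (div_le_one_of_le₀ (min_le_right t s) hs.le)
    have hga' : g a - g x₀ = r • u := by
      rw [hga, ← htu, smul_smul, div_mul_cancel₀ _ ht.ne']
    have hgb' : g b - g x₀ = r • v := by
      rw [hgb, ← hsv, smul_smul, div_mul_cancel₀ _ hs.ne']
    obtain ⟨c, hfc, hgc⟩ := hA (1/2) a b (by norm_num) (by norm_num)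
    have hgc' : (r/2) • (u + v) = g c - g x₀ := by
      have h1 : g c - g x₀ = (1/2 : ℝ) • (g a - g x₀) + (1/2 : ℝ) • (g b - g x₀) := by
        rw [hgc]; module
      rw [h1, hga', hgb']
      module
    have hr2 : (0:ℝ) < r/2 := by positivity
    refine ⟨⟨r/2, c, hr2, hgc'⟩, ?_⟩
    rw [hψ _ (r/2) c hr2 hgc', hψ u t x ht htu, hψ v s x' hs hsv]
    have hfc' : f c - f x₀ = (1/2 : ℝ) • (f a - f x₀) + (1/2 : ℝ) • (f b - f x₀) := by
      rw [hfc]; module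
    rw [hfc', hfa, hfb]
    match_scalars <;> (field_simp; try ring)
  -- the difference function Φ on K - K is well defined
  have hΦwd : ∀ u v u' v' : Z, u ∈ K → v ∈ K → u' ∈ K → v' ∈ K →
      u - v = u' - v' → ψ u - ψ v = ψ u' - ψ v' := by
    intro u v u' v' hu hv hu' hv' h
    have h1 : u + v' = u' + v := by
      have := sub_eq_sub_iff_add_eq_add.mp h
      linear_combination (norm := abel) this
    have h2 : ψ u + ψ v' = ψ u' + ψ v := by
      rw [← (hKadd u v' hu hv').2, ← (hKadd u' v hu' hv).2, h1]
    linear_combination (norm := abel) h2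
  obtain ⟨Φ, hΦ⟩ : ∃ Φ : Z → Y, ∀ (w u v : Z), u ∈ K → v ∈ K → w = u - v →
      Φ w = ψ u - ψ v := by
    refine ⟨fun w => if h : ∃ u v, u ∈ K ∧ v ∈ K ∧ w = u - v then
      ψ (Classical.choose h) - ψ (Classical.choose (Classical.choose_spec h)) else 0, ?_⟩
    intro w u v hu hv hw
    have hmem : ∃ u v, u ∈ K ∧ v ∈ K ∧ w = u - v := ⟨u, v, hu, hv, hw⟩
    simp only [dif_pos hmem]
    obtain ⟨hu', hv', hw'⟩ := Classical.choose_spec (Classical.choose_spec hmem)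
    exact hΦwd _ _ _ _ hu' hv' hu hv (by rw [← hw', ← hw])
  -- the subspace W = K - K
  let W : Submodule ℝ Z :=
    { carrier := {w | ∃ u v, u ∈ K ∧ v ∈ K ∧ w = u - v}
      add_mem' := by
        rintro w₁ w₂ ⟨u₁, v₁, hu₁, hv₁, rfl⟩ ⟨u₂, v₂, hu₂, hv₂, rfl⟩
        exact ⟨u₁ + u₂, v₁ + v₂, (hKadd _ _ hu₁ hu₂).1, (hKadd _ _ hv₁ hv₂).1, by abel⟩
      zero_mem' := ⟨0, 0, hK0, hK0, by simp⟩
      smul_mem' := by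
        rintro c w ⟨u, v, hu, hv, rfl⟩
        rcases lt_trichotomy c 0 with hc | hc | hc
        · exact ⟨(-c) • v, (-c) • u, (hKsmul _ _ (by linarith) hv).1,
            (hKsmul _ _ (by linarith) hu).1, by module⟩
        · refine ⟨0, 0, hK0, hK0, by rw [hc]; simp⟩
        · exact ⟨c • u, c • v, (hKsmul _ _ hc hu).1, (hKsmul _ _ hc hv).1, by module⟩ }
  have hWmem : ∀ w : Z, w ∈ W ↔ ∃ u v, u ∈ K ∧ v ∈ K ∧ w = u - v := fun w => Iff.rfl
  -- the linear map T on W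
  let T : W →ₗ[ℝ] Y :=
    { toFun := fun w => Φ w
      map_add' := by
        rintro ⟨w₁, hw₁m⟩ ⟨w₂, hw₂m⟩
        obtain ⟨u₁, v₁, hu₁, hv₁, hw₁⟩ := hw₁m
        obtain ⟨u₂, v₂, hu₂, hv₂, hw₂⟩ := hw₂m
        show Φ (w₁ + w₂) = Φ w₁ + Φ w₂
        rw [hΦ w₁ u₁ v₁ hu₁ hv₁ hw₁, hΦ w₂ u₂ v₂ hu₂ hv₂ hw₂,
          hΦ (w₁ + w₂) (u₁ + u₂) (v₁ + v₂) (hKadd _ _ hu₁ hu₂).1 (hKadd _ _ hv₁ hv₂).1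
            (by rw [hw₁, hw₂]; abel),
          (hKadd _ _ hu₁ hu₂).2, (hKadd _ _ hv₁ hv₂).2]
        abel
      map_smul' := by
        rintro c ⟨w, hwm⟩
        obtain ⟨u, v, hu, hv, hw⟩ := hwm
        show Φ (c • w) = c • Φ w
        rw [hΦ w u v hu hv hw]
        rcases lt_trichotomy c 0 with hc | hc | hc
        · have h1 := hKsmul (-c) v (by linarith) hv
          have h2 := hKsmul (-c) u (by linarith) hu
          rw [hΦ (c • w) ((-c) • v) ((-c) • u) h1.1 h2.1 (by rw [hw]; module), h1.2, h2.2]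
          module
        · rw [hc, zero_smul, zero_smul, hΦ 0 0 0 hK0 hK0 (by simp), hψ0, sub_self]
        · have h1 := hKsmul c u hc hu
          have h2 := hKsmul c v hc hv
          rw [hΦ (c • w) (c • u) (c • v) h1.1 h2.1 (by rw [hw]; module), h1.2, h2.2]
          module }
  -- extend to all of Z via a complement
  obtain ⟨Q, hQ⟩ := Submodule.exists_isCompl W
  set π := W.linearProjOfIsCompl Q hQ with hπdef
  refine ⟨T.comp π, f x₀ - T (π (g x₀)), ?_⟩
  intro x
  have hmem : g x - g x₀ ∈ W := ⟨g x - g x₀, 0, hKgx x, hK0, by simp⟩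
  have hval : T ⟨g x - g x₀, hmem⟩ = f x - f x₀ := by
    show Φ (g x - g x₀) = f x - f x₀
    rw [hΦ _ (g x - g x₀) 0 (hKgx x) hK0 (by simp), hψgx x, hψ0, sub_zero]
  have hproj : π (g x - g x₀) = ⟨g x - g x₀, hmem⟩ :=
    Submodule.linearProjOfIsCompl_apply_left hQ ⟨g x - g x₀, hmem⟩
  have hsplit : π (g x) = π (g x - g x₀) + π (g x₀) := by
    rw [← map_add]; congr 1; abel
  calc f x = (f x - f x₀) + f x₀ := by abel
    _ = T (π (g x - g x₀)) + f x₀ := by rw [hproj, hval]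
    _ = T (π (g x)) - T (π (g x₀)) + f x₀ := by rw [hsplit, map_add]; abel
    _ = T.comp π (g x) + (f x₀ - T (π (g x₀))) := by
        rw [LinearMap.comp_apply]; abel
end

section
/- Let X be a nonempty set and let f : X → V and g : X → V' be two representations of the same preorder ≿ on X, with values in partially ordered real vector spaces V and V'. Suppose f and g are co-convex (the joint image (f,g)(X) ⊆ V × V' is convex) and pervasive (V = Span(f(X)-f(X)) and V' = Span(g(X)-g(X))). Then there exist a unique linear order isomorphism L : V → V' and a unique b ∈ V' such that g = L∘f + b. -/
/-! The span `D` of the differences of the joint image `S = {(f x, g x)}` is a subspace of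
`V × V'`. Convexity of `S` makes every element of `D` a positive multiple `c • (s - t)` of a
difference of two points of `S`. Since `f` and `g` identify the same points of `X`, both
projections of `D` are then injective, and pervasiveness makes them surjective, so `D` is the graph
of a linear isomorphism `L` and `g - L ∘ f` is constant. As `range f` is convex as well, any
`v - w` is `c • (f x - f y)` with `c > 0`, whence
`v ≿ w ↔ f x ≿ f y ↔ x ≿ y ↔ g x ≿ g y ↔ L v ≿ L w`. Uniqueness holds because the
differences of values of `f` span `V`. -/

open Pointwise

def IsLinearPartialOrder {V : Type*} [AddCommGroup V] [Module ℝ V]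
    (r : V → V → Prop) : Prop :=
  (∀ v, r v v) ∧ (∀ u v w, r u v → r v w → r u w) ∧ (∀ v w, r v w → r w v → v = w) ∧
    ∀ (v v' w : V) (l : ℝ), 0 < l → (r v v' ↔ r (l • v + w) (l • v' + w))

open Set Submodule

section Convex

variable {𝕜 E F : Type*} [Field 𝕜] [LinearOrder 𝕜] [IsStrictOrderedRing 𝕜]
  [AddCommGroup E] [Module 𝕜 E] [AddCommGroup F] [Module 𝕜 F] {S : Set E}

theorem Convex.exists_pos_smul_sub_of_mem_span_sub (hS : Convex 𝕜 S) (hne : S.Nonempty)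
    {z : E} (hz : z ∈ span 𝕜 (S - S)) : ∃ c : 𝕜, 0 < c ∧ ∃ s ∈ S, ∃ t ∈ S, z = c • (s - t) := by
  obtain ⟨s₀, hs₀⟩ := hne
  induction hz using Submodule.span_induction with
  | mem z hz =>
    obtain ⟨s, hs, t, ht, rfl⟩ := hz
    exact ⟨1, one_pos, s, hs, t, ht, (one_smul _ _).symm⟩
  | zero => exact ⟨1, one_pos, s₀, hs₀, s₀, hs₀, by simp⟩
  | add z z' _ _ hz hz' =>
    obtain ⟨c, hc, s, hs, t, ht, rfl⟩ := hz
    obtain ⟨d, hd, s', hs', t', ht', rfl⟩ := hz'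
    have hcd : 0 < c + d := add_pos hc hd
    have hsum : c / (c + d) + d / (c + d) = 1 := by rw [← add_div, div_self hcd.ne']
    refine ⟨c + d, hcd, _, hS hs hs' (by positivity) (by positivity) hsum,
      _, hS ht ht' (by positivity) (by positivity) hsum, ?_⟩
    match_scalars <;> field_simp
  | smul a z _ hz =>
    obtain ⟨c, hc, s, hs, t, ht, rfl⟩ := hz
    rcases lt_trichotomy a 0 with ha | rfl | ha
    · exact ⟨-a * c, mul_pos (neg_pos.2 ha) hc, t, ht, s, hs, by module⟩
    · exact ⟨1, one_pos, s₀, hs₀, s₀, hs₀, by simp⟩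
    · exact ⟨a * c, mul_pos ha hc, s, hs, t, ht, by module⟩

theorem Convex.bijective_comp_subtype_span_sub (hS : Convex 𝕜 S) (hne : S.Nonempty)
    (φ : E →ₗ[𝕜] F) (hinj : InjOn φ S) (hspan : span 𝕜 (φ '' S - φ '' S) = ⊤) :
    Function.Bijective (φ ∘ (span 𝕜 (S - S)).subtype) := by
  rw [← LinearMap.coe_comp]
  constructor
  · rw [← LinearMap.ker_eq_bot, LinearMap.ker_eq_bot']
    rintro ⟨z, hz⟩ hφz
    obtain ⟨c, hc, s, hs, t, ht, rfl⟩ := hS.exists_pos_smul_sub_of_mem_span_sub hne hz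
    have hst : φ s = φ t := by
      simpa [smul_eq_zero, hc.ne', sub_eq_zero] using hφz
    simp [hinj hs ht hst]
  · rw [← LinearMap.range_eq_top, LinearMap.range_comp, range_subtype, map_span, image_sub,
      hspan]

end Convex

theorem exists_linearEquiv_map_sub_eq {𝕜 X M N : Type*} [Field 𝕜] [LinearOrder 𝕜]
    [IsStrictOrderedRing 𝕜] [AddCommGroup M] [Module 𝕜 M] [AddCommGroup N] [Module 𝕜 N]
    [Nonempty X] {f : X → M} {g : X → N} (hconv : Convex 𝕜 (range fun x => (f x, g x)))
    (hfg : ∀ x y, f x = f y ↔ g x = g y) (hf : span 𝕜 (range f - range f) = ⊤)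
    (hg : span 𝕜 (range g - range g) = ⊤) :
    ∃ e : M ≃ₗ[𝕜] N, ∀ x y, e (f x - f y) = g x - g y := by
  obtain ⟨e, he⟩ := Submodule.exists_equiv_eq_graph
    (hconv.bijective_comp_subtype_span_sub (range_nonempty _) (LinearMap.fst 𝕜 M N)
      (by rintro _ ⟨x, rfl⟩ _ ⟨y, rfl⟩ h; simp_all) (by rwa [LinearMap.coe_fst, ← range_comp]))
    (hconv.bijective_comp_subtype_span_sub (range_nonempty _) (LinearMap.snd 𝕜 M N)
      (by rintro _ ⟨x, rfl⟩ _ ⟨y, rfl⟩ h; simp_all) (by rwa [LinearMap.coe_snd, ← range_comp]))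
  refine ⟨e, fun x y => ?_⟩
  have hmem : (f x, g x) - (f y, g y) ∈ e.toLinearMap.graph :=
    he ▸ subset_span ⟨_, ⟨x, rfl⟩, _, ⟨y, rfl⟩, rfl⟩
  exact ((LinearMap.mem_graph_iff _ _).1 hmem).symm

theorem LinearMap.eq_and_eq_of_forall_apply_add_eq {R X M N : Type*} [Ring R] [AddCommGroup M]
    [Module R M] [AddCommGroup N] [Module R N] [Nonempty X] {f : X → M}
    (hf : span R (Set.range f - Set.range f) = ⊤) {L L' : M →ₗ[R] N} {b b' : N}
    (h : ∀ x, L (f x) + b = L' (f x) + b') : L = L' ∧ b = b' := by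
  have hL : L = L' := by
    refine LinearMap.ext_on hf ?_
    rintro _ ⟨_, ⟨x, rfl⟩, _, ⟨y, rfl⟩, rfl⟩
    simp only [map_sub]
    linear_combination (norm := abel) h x - h y
  obtain ⟨x₀⟩ := ‹Nonempty X›
  exact ⟨hL, add_left_cancel (by rw [h x₀, hL])⟩

namespace IsLinearPartialOrder

variable {V : Type*} [AddCommGroup V] [Module ℝ V] {r : V → V → Prop}

theorem eq_iff (hr : IsLinearPartialOrder r) {v w : V} : v = w ↔ r v w ∧ r w v :=
  ⟨by rintro rfl; exact ⟨hr.1 v, hr.1 v⟩, fun h => hr.2.2.1 v w h.1 h.2⟩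

theorem iff_of_sub_eq_smul_sub (hr : IsLinearPartialOrder r) {v w a b : V} {c : ℝ} (hc : 0 < c)
    (h : v - w = c • (a - b)) : r v w ↔ r a b := by
  have hv : v = c • a + (w - c • b) := by linear_combination (norm := module) h
  rw [hr.2.2.2 a b (w - c • b) c hc, ← hv, add_sub_cancel]

end IsLinearPartialOrder

theorem coconvex_pervasive_unique_iso {X V V' : Type*} [Nonempty X]
    [AddCommGroup V] [Module ℝ V] [AddCommGroup V'] [Module ℝ V']
    (rX : X → X → Prop) (rV : V → V → Prop) (rV' : V' → V' → Prop)
    (hV : IsLinearPartialOrder rV) (hV' : IsLinearPartialOrder rV')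
    (f : X → V) (g : X → V')
    (hf : ∀ x y, rX x y ↔ rV (f x) (f y))
    (hg : ∀ x y, rX x y ↔ rV' (g x) (g y))
    (hconv : Convex ℝ (Set.range fun x => (f x, g x)))
    (hperf : Submodule.span ℝ (Set.range f - Set.range f) = ⊤)
    (hperg : Submodule.span ℝ (Set.range g - Set.range g) = ⊤) :
    ∃! Lb : (V →ₗ[ℝ] V') × V',
      Function.Bijective Lb.1 ∧ (∀ v w, rV v w ↔ rV' (Lb.1 v) (Lb.1 w)) ∧
        ∀ x, g x = Lb.1 (f x) + Lb.2 := by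
  obtain ⟨x₀⟩ := ‹Nonempty X›
  have hfg : ∀ x y, f x = f y ↔ g x = g y := fun x y => by
    rw [hV.eq_iff, hV'.eq_iff, ← hf, ← hf, ← hg, ← hg]
  obtain ⟨e, he⟩ := exists_linearEquiv_map_sub_eq hconv hfg hperf hperg
  have hconvf : Convex ℝ (range f) := by
    have := hconv.linear_image (LinearMap.fst ℝ V V')
    rwa [LinearMap.coe_fst, ← range_comp] at this
  have hgraph : ∀ x, g x = e (f x) + (g x₀ - e (f x₀)) := fun x => by
    rw [← sub_add_cancel (g x) (g x₀), ← he, map_sub]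
    abel
  refine ⟨(e.toLinearMap, g x₀ - e (f x₀)), ⟨e.bijective, fun v w => ?_, hgraph⟩, ?_⟩
  · obtain ⟨c, hc, _, ⟨x, rfl⟩, _, ⟨y, rfl⟩, hvw⟩ :=
      hconvf.exists_pos_smul_sub_of_mem_span_sub (range_nonempty f)
        (hperf ▸ mem_top : v - w ∈ span ℝ (range f - range f))
    have hevw : e v - e w = c • (g x - g y) := by rw [← he, ← map_sub, ← map_smul, hvw]
    rw [hV.iff_of_sub_eq_smul_sub hc hvw, LinearEquiv.coe_coe,
      hV'.iff_of_sub_eq_smul_sub hc hevw, ← hf, hg]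
  · rintro Lb ⟨-, -, hLb⟩
    obtain ⟨hL, hb⟩ := LinearMap.eq_and_eq_of_forall_apply_add_eq hperf
      fun x => (hLb x).symm.trans (hgraph x)
    exact Prod.ext hL hb
end

section
/- (Pareto indifference implies linear representability) Let X be a nonempty set, I a nonempty index set, and for i ∈ I ∪ {0} let ≿_i be preorders on X with co-convex representations f_i : X → V_i in partially ordered vector spaces. If Pareto indifference holds (x ∼_i y for all i ∈ I implies x ∼_0 y), then there exist a partially ordered vector space V and a linear map L : ∏_{i∈I} V_i → V such that L∘f_I represents ≿_0, where f_I = (f_i)_{i∈I}. -/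
/-!
The joint image `S` of `x ↦ ((f_i x)_i, f₀ x)` is convex, and Pareto indifference together with
antisymmetry of `≿_{V₀}` says that the first coordinate of a point of `S` determines the second.
For a convex set every vector of its vector span is a nonnegative multiple `μ • (s - t)` of a
difference of two of its points, so the vector span of `S` is the graph of a linear map
`D → V₀` on a subspace `D ⊆ ∏ V_i`. Extending it to `G : ∏ V_i → V₀` gives
`G (f x) = f₀ x + c` for a constant `c`; hence `G ∘ f` represents `≿₀`, and the order of `V₀`
pulled back along the injection `(∏ V_i) ⧸ ker G → V₀` is the required one.
-/

universe u v

namespace IsLinearPartialOrder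

variable {V W : Type*} [AddCommGroup V] [Module ℝ V] [AddCommGroup W] [Module ℝ W]
  {r : V → V → Prop}

theorem refl (h : IsLinearPartialOrder r) (v : V) : r v v := h.1 v

theorem antisymm (h : IsLinearPartialOrder r) {v w : V} (hvw : r v w) (hwv : r w v) : v = w :=
  h.2.2.1 v w hvw hwv

theorem add_right_iff (h : IsLinearPartialOrder r) (v v' w : V) :
    r (v + w) (v' + w) ↔ r v v' := by
  simpa only [one_smul] using (h.2.2.2 v v' w 1 one_pos).symm

theorem comap (h : IsLinearPartialOrder r) {g : W →ₗ[ℝ] V} (hg : Function.Injective g) :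
    IsLinearPartialOrder fun a b => r (g a) (g b) := by
  refine ⟨fun a => h.refl _, fun a b c hab hbc => h.2.1 _ _ _ hab hbc,
    fun a b hab hba => hg (h.antisymm hab hba), fun a b c l hl => ?_⟩
  simp only [map_add, map_smul]
  exact h.2.2.2 _ _ _ l hl

end IsLinearPartialOrder

section ConvexCone

variable {𝕜 E : Type*} [Field 𝕜] [LinearOrder 𝕜] [IsStrictOrderedRing 𝕜]
  [AddCommGroup E] [Module 𝕜 E] {S : Set E}

theorem Convex.exists_smul_sub_eq_smul_sub_add_smul_sub (hS : Convex 𝕜 S)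
    {s₁ t₁ s₂ t₂ : E} (hs₁ : s₁ ∈ S) (ht₁ : t₁ ∈ S) (hs₂ : s₂ ∈ S) (ht₂ : t₂ ∈ S)
    {μ ν : 𝕜} (hμ : 0 ≤ μ) (hν : 0 ≤ ν) :
    ∃ c : 𝕜, 0 ≤ c ∧ ∃ s ∈ S, ∃ t ∈ S, μ • (s₁ - t₁) + ν • (s₂ - t₂) = c • (s - t) := by
  rcases (add_nonneg hμ hν).eq_or_lt with hμν | hμν
  · obtain ⟨rfl, rfl⟩ : μ = 0 ∧ ν = 0 := (add_eq_zero_iff_of_nonneg hμ hν).mp hμν.symm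
    exact ⟨0, le_rfl, s₁, hs₁, t₁, ht₁, by simp⟩
  -- Split `μ + ν` into the convex weights `μ / (μ + ν)` and `ν / (μ + ν)`.
  have ha : 0 ≤ μ / (μ + ν) := div_nonneg hμ hμν.le
  have hb : 0 ≤ ν / (μ + ν) := div_nonneg hν hμν.le
  have hab : μ / (μ + ν) + ν / (μ + ν) = 1 := by rw [← add_div, div_self hμν.ne']
  refine ⟨μ + ν, hμν.le, _, hS hs₁ hs₂ ha hb hab, _, hS ht₁ ht₂ ha hb hab, ?_⟩
  simp only [smul_sub, smul_add, smul_smul, mul_div_cancel₀ _ hμν.ne']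
  abel

theorem Convex.exists_smul_sub_of_mem_vectorSpan (hS : Convex 𝕜 S) (hne : S.Nonempty)
    {v : E} (hv : v ∈ vectorSpan 𝕜 S) :
    ∃ μ : 𝕜, 0 ≤ μ ∧ ∃ s ∈ S, ∃ t ∈ S, v = μ • (s - t) := by
  rw [vectorSpan_def] at hv
  induction hv using Submodule.span_induction with
  | mem v hv =>
    obtain ⟨s, hs, t, ht, rfl⟩ := hv
    exact ⟨1, zero_le_one, s, hs, t, ht, (one_smul 𝕜 _).symm⟩
  | zero =>
    obtain ⟨s, hs⟩ := hne
    exact ⟨0, le_rfl, s, hs, s, hs, (zero_smul 𝕜 _).symm⟩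
  | add v w _ _ hv hw =>
    obtain ⟨μ, hμ, s₁, hs₁, t₁, ht₁, rfl⟩ := hv
    obtain ⟨ν, hν, s₂, hs₂, t₂, ht₂, rfl⟩ := hw
    exact hS.exists_smul_sub_eq_smul_sub_add_smul_sub hs₁ ht₁ hs₂ ht₂ hμ hν
  | smul a v _ hv =>
    obtain ⟨μ, hμ, s, hs, t, ht, rfl⟩ := hv
    rw [smul_smul]
    rcases le_total 0 (a * μ) with h | h
    · exact ⟨a * μ, h, s, hs, t, ht, rfl⟩
    · exact ⟨-(a * μ), neg_nonneg.mpr h, t, ht, s, hs, by rw [neg_smul, ← smul_neg, neg_sub]⟩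

end ConvexCone

theorem Submodule.exists_linearMap_apply_fst_eq_snd {K E F : Type*} [DivisionRing K]
    [AddCommGroup E] [Module K E] [AddCommGroup F] [Module K F] (g : Submodule K (E × F))
    (hg : ∀ x ∈ g, x.1 = 0 → x.2 = 0) : ∃ G : E →ₗ[K] F, ∀ x ∈ g, G x.1 = x.2 := by
  obtain ⟨G, hG⟩ := g.toLinearPMap.toFun.exists_extend
  refine ⟨G, fun x hx => ?_⟩
  rw [← g.toLinearPMap_graph_eq hg, LinearPMap.mem_graph_iff] at hx
  obtain ⟨y, hy₁, hy₂⟩ := hx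
  rw [← hy₁, ← hy₂]
  exact LinearMap.congr_fun hG y

theorem Convex.exists_linearMap_apply_sub_eq_sub {𝕜 E F : Type*} [Field 𝕜] [LinearOrder 𝕜]
    [IsStrictOrderedRing 𝕜] [AddCommGroup E] [Module 𝕜 E] [AddCommGroup F] [Module 𝕜 F]
    {S : Set (E × F)} (hS : Convex 𝕜 S) (hfun : ∀ p ∈ S, ∀ q ∈ S, p.1 = q.1 → p.2 = q.2) :
    ∃ G : E →ₗ[𝕜] F, ∀ p ∈ S, ∀ q ∈ S, G (p.1 - q.1) = p.2 - q.2 := by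
  rcases S.eq_empty_or_nonempty with rfl | hne
  · exact ⟨0, by simp⟩
  have hgraph : ∀ x ∈ vectorSpan 𝕜 S, x.1 = 0 → x.2 = 0 := by
    intro x hx hx₁
    obtain ⟨μ, -, s, hs, t, ht, rfl⟩ := hS.exists_smul_sub_of_mem_vectorSpan hne hx
    rcases eq_or_ne μ 0 with rfl | hμ
    · simp
    have hst : s.1 = t.1 := sub_eq_zero.mp ((smul_eq_zero.mp hx₁).resolve_left hμ)
    simp [hfun s hs t ht hst]
  obtain ⟨G, hG⟩ := (vectorSpan 𝕜 S).exists_linearMap_apply_fst_eq_snd hgraph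
  exact ⟨G, fun p hp q hq => hG _ (vsub_mem_vectorSpan 𝕜 hp hq)⟩

theorem linear_rep_of_pareto_indifference_general {X : Type*}
    {I : Type u}
    {V : I → Type v} [∀ i, AddCommGroup (V i)] [∀ i, Module ℝ (V i)]
    {V0 : Type*} [AddCommGroup V0] [Module ℝ V0]
    (r : I → X → X → Prop) (r0 : X → X → Prop)
    (rV : ∀ i, V i → V i → Prop) (rV0 : V0 → V0 → Prop)
    (hV : ∀ i, IsLinearPartialOrder (rV i)) (hV0 : IsLinearPartialOrder rV0)
    (f : ∀ i, X → V i) (f0 : X → V0)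
    (hrep : ∀ i, ∀ x y, r i x y ↔ rV i (f i x) (f i y))
    (hrep0 : ∀ x y, r0 x y ↔ rV0 (f0 x) (f0 y))
    (hconv : Convex ℝ (Set.range fun x => ((fun i => f i x, f0 x) : (∀ i, V i) × V0)))
    (hP1 : ∀ x y : X, (∀ i, r i x y ∧ r i y x) → (r0 x y ∧ r0 y x)) :
    ∃ (W : ModuleCat.{max u v} ℝ) (rW : W → W → Prop),
      IsLinearPartialOrder rW ∧
      ∃ L : (∀ i, V i) →ₗ[ℝ] W,
        ∀ x y : X, r0 x y ↔ rW (L fun i => f i x) (L fun i => f i y) := by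
  have hpareto : ∀ x y, (fun i => f i x) = (fun i => f i y) → f0 x = f0 y := by
    intro x y hxy
    have hind : ∀ i, r i x y ∧ r i y x := fun i => by
      simp only [hrep, congrFun hxy i, (hV i).refl, and_self]
    obtain ⟨hxy0, hyx0⟩ := hP1 x y hind
    exact hV0.antisymm ((hrep0 x y).1 hxy0) ((hrep0 y x).1 hyx0)
  obtain ⟨G, hG⟩ := hconv.exists_linearMap_apply_sub_eq_sub <| by
    rintro _ ⟨x, rfl⟩ _ ⟨y, rfl⟩ hxy
    exact hpareto x y hxy
  set Ĝ := (LinearMap.ker G).liftQ G le_rfl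
  have hĜ : Function.Injective Ĝ :=
    LinearMap.ker_eq_bot.mp (Submodule.ker_liftQ_eq_bot _ _ _ le_rfl)
  refine ⟨ModuleCat.of ℝ (_ ⧸ LinearMap.ker G), _, hV0.comap hĜ, (LinearMap.ker G).mkQ,
    fun x y => ?_⟩
  have hshift : ∀ z, G (fun i => f i z) = f0 z + (G (fun i => f i x) - f0 x) := by
    intro z
    have := hG _ (Set.mem_range_self z) _ (Set.mem_range_self x)
    rw [map_sub] at this
    rw [← sub_eq_iff_eq_add']
    exact sub_eq_sub_iff_sub_eq_sub.mpr this
  change r0 x y ↔ rV0 (G fun i => f i x) (G fun i => f i y)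
  rw [hrep0, hshift x, hshift y, hV0.add_right_iff]

theorem linear_rep_of_pareto_indifference {X : Type*} [Nonempty X]
    {I : Type u} [Nonempty I]
    {V : I → Type v} [∀ i, AddCommGroup (V i)] [∀ i, Module ℝ (V i)]
    {V0 : Type*} [AddCommGroup V0] [Module ℝ V0]
    (r : I → X → X → Prop) (r0 : X → X → Prop)
    (rV : ∀ i, V i → V i → Prop) (rV0 : V0 → V0 → Prop)
    (hV : ∀ i, IsLinearPartialOrder (rV i)) (hV0 : IsLinearPartialOrder rV0)
    (f : ∀ i, X → V i) (f0 : X → V0)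
    (hrep : ∀ i, ∀ x y, r i x y ↔ rV i (f i x) (f i y))
    (hrep0 : ∀ x y, r0 x y ↔ rV0 (f0 x) (f0 y))
    (hconv : Convex ℝ (Set.range fun x => ((fun i => f i x, f0 x) : (∀ i, V i) × V0)))
    (hP1 : ∀ x y : X, (∀ i, r i x y ∧ r i y x) → (r0 x y ∧ r0 y x)) :
    ∃ (W : ModuleCat.{max u v} ℝ) (rW : W → W → Prop),
      IsLinearPartialOrder rW ∧
      ∃ L : (∀ i, V i) →ₗ[ℝ] W,
        ∀ x y : X, r0 x y ↔ rW (L fun i => f i x) (L fun i => f i y) :=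
  linear_rep_of_pareto_indifference_general r r0 rV rV0 hV hV0 f f0 hrep hrep0 hconv hP1
end

section
/- (Counterexample showing domain richness is needed) Let X = ℝ, I = {1,2}, f_1(x) = x, f_2(x) = -x with V_1 = V_2 = ℝ (usual order), and let V_0 = ℝ with the trivial partial order (x ≿ 0 iff x = 0), with f_0(x) = x. Then there exist no positive linear map L : ℝ² → V_0 and constant b ∈ V_0 with f_0 = L∘(f_1, f_2) + b, even though the preorder ≿_0 represented by f_0 satisfies semi-strong Pareto with respect to the preorders represented by f_1 and f_2. -/
theorem no_positive_affine_aggregation :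
    (∀ x y : ℝ, x ≥ y → x ≤ y → x = y) ∧
    ¬ ∃ (L : (ℝ × ℝ) →ₗ[ℝ] ℝ) (b : ℝ),
        (∀ v : ℝ × ℝ, 0 ≤ v.1 → 0 ≤ v.2 → L v = 0) ∧
        ∀ x : ℝ, x = L (x, -x) + b := by
  refine ⟨fun x y h1 h2 => le_antisymm h2 h1, ?_⟩
  rintro ⟨L, b, hpos, heq⟩
  have h10 : L (1, 0) = 0 := hpos (1, 0) (by norm_num) (by norm_num)
  have h01 : L (0, 1) = 0 := hpos (0, 1) (by norm_num) (by norm_num)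
  have h1 : L (1, -1) = 0 := by
    have e : ((1:ℝ), (-1:ℝ)) = ((1:ℝ), (0:ℝ)) - ((0:ℝ), (1:ℝ)) := by
      simp [Prod.ext_iff]
    rw [e, map_sub, h10, h01, sub_zero]
  have hb : (0:ℝ) = L (0, -0) + b := heq 0
  have h0 : L ((0:ℝ), -(0:ℝ)) = 0 := by
    have e : ((0:ℝ), -(0:ℝ)) = (0 : ℝ × ℝ) := by simp
    rw [e, map_zero]
  have h1' : (1:ℝ) = L (1, -1) + b := by simpa using heq 1
  rw [h0] at hb
  rw [h1, ← hb] at h1'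
  norm_num at h1'
end
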